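/- Let U ⊆ ℝ^n be open and let E be a smooth vector field on U such that: (a) for all u ∈ U and all distinct α, β ∈ {1,…,r}, E^{1(α)}(u) ≠ E^{1(β)}(u); and (b) for every α ∈ {1,…,r} with m_α ≥ 2, E^{2(α)}(u) ≠ 0 for all u ∈ U. Then the Nijenhuis torsion of L = E∘ vanishes on U if and only if E is an eventual identity on U (i.e. its eventual-identity defect K vanishes identically). -/

import Mathlib

open scoped BigOperators

section Defs

variable {ι : Type*} [Fintype ι] [DecidableEq ι]

/-- Partial derivative of a scalar function in the `i`-th coordinate direction. -/
noncomputable def pd (i : ι) (f : (ι → ℝ) → ℝ) (u : ι → ℝ) : ℝ :=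
  fderiv ℝ f u (Pi.single i 1)

/-- Lie bracket of two vector fields on `ι → ℝ`. -/
noncomputable def lieBr (X Y : (ι → ℝ) → (ι → ℝ)) (u : ι → ℝ) : ι → ℝ :=
  fun i => ∑ s, (X u s * pd s (fun v => Y v i) u - Y u s * pd s (fun v => X v i) u)

/-- Nijenhuis torsion of a pointwise operator `L` (applied pointwise to vector fields):
`N_L(X,Y) = [LX,LY] − L[LX,Y] − L[X,LY] + L²[X,Y]`. -/
noncomputable def nij (L : (ι → ℝ) → (ι → ℝ) → (ι → ℝ))
    (X Y : (ι → ℝ) → (ι → ℝ)) (u : ι → ℝ) : ι → ℝ :=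
  lieBr (fun v => L v (X v)) (fun v => L v (Y v)) u
  - L u (lieBr (fun v => L v (X v)) Y u)
  - L u (lieBr X (fun v => L v (Y v)) u)
  + L u (L u (lieBr X Y u))

end Defs

section Block

variable {r : ℕ}

/-- David–Hertling block product on `ℝ^n`, `n = m 0 + ⋯ + m (r-1)` (0-based indices:
`(u∘v)_{i(α)} = Σ_{j+k=i} u_{j(α)} v_{k(α)}`). -/
noncomputable def blockProd (m : Fin r → ℕ)
    (u v : ((α : Fin r) × Fin (m α)) → ℝ) : ((α : Fin r) × Fin (m α)) → ℝ :=
  fun i => ∑ j : Fin (m i.1), ∑ k : Fin (m i.1),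
    if (j : ℕ) + (k : ℕ) = (i.2 : ℕ) then u ⟨i.1, j⟩ * v ⟨i.1, k⟩ else 0

/-- Unit of the block product: `e^{i(α)} = δ^i_1`. -/
noncomputable def blockUnit (m : Fin r → ℕ) : ((α : Fin r) × Fin (m α)) → ℝ :=
  fun i => if (i.2 : ℕ) = 0 then 1 else 0

/-- Eventual-identity defect of a vector field `E`:
`K(X,Y) = [E, X∘Y] − [E,X]∘Y − X∘[E,Y] − [e,E]∘X∘Y`. -/
noncomputable def Kdef (m : Fin r → ℕ)
    (E X Y : (((α : Fin r) × Fin (m α)) → ℝ) → ((α : Fin r) × Fin (m α)) → ℝ)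
    (u : ((α : Fin r) × Fin (m α)) → ℝ) : ((α : Fin r) × Fin (m α)) → ℝ :=
  lieBr E (fun v => blockProd m (X v) (Y v)) u
  - blockProd m (lieBr E X u) (Y u)
  - blockProd m (X u) (lieBr E Y u)
  - blockProd m (blockProd m (lieBr (fun _ => blockUnit m) E u) (X u)) (Y u)

end Block

namespace S6
variable {r : ℕ} {m : Fin r → ℕ}

/-- block component as a total function on ℕ -/
noncomputable def ub (x : ((α : Fin r) × Fin (m α)) → ℝ) (α : Fin r) (p : ℕ) : ℝ :=
  if h : p < m α then x ⟨α, ⟨p, h⟩⟩ else 0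

lemma ub_coe (x : ((α : Fin r) × Fin (m α)) → ℝ) (α : Fin r) (j : Fin (m α)) :
    ub x α (j : ℕ) = x ⟨α, j⟩ := by
  simp [ub, j.isLt]

lemma bp_apply (x y : ((α : Fin r) × Fin (m α)) → ℝ) (α : Fin r) (i : Fin (m α)) :
    blockProd m x y ⟨α, i⟩ =
      ∑ p ∈ Finset.range ((i : ℕ) + 1), ub x α p * ub y α ((i : ℕ) - p) := by
  unfold blockProd
  have h1 : ∀ j : Fin (m α), ∀ k : Fin (m α),
      (if (j : ℕ) + (k : ℕ) = (i : ℕ) then x ⟨α, j⟩ * y ⟨α, k⟩ else 0) =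
      (if (j : ℕ) + (k : ℕ) = (i : ℕ) then ub x α j * ub y α k else 0) := by
    intro j k; rw [ub_coe, ub_coe]
  simp only [h1]
  rw [Fin.sum_univ_eq_sum_range (fun j => ∑ k : Fin (m α),
    if j + (k : ℕ) = (i : ℕ) then ub x α j * ub y α k else 0)]
  have h2 : ∀ j ∈ Finset.range (m α),
      (∑ k : Fin (m α), if j + (k : ℕ) = (i : ℕ) then ub x α j * ub y α k else 0) =
      ∑ k ∈ Finset.range (m α), if j + k = (i : ℕ) then ub x α j * ub y α k else 0 := by
    intro j _
    exact Fin.sum_univ_eq_sum_range (fun k => if j + k = (i : ℕ) then ub x α j * ub y α k else 0) (m α)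
  rw [Finset.sum_congr rfl h2]
  -- shrink outer range to i+1
  have hsub : Finset.range ((i : ℕ) + 1) ⊆ Finset.range (m α) := by
    intro t ht; simp only [Finset.mem_range] at *; omega
  rw [← Finset.sum_subset hsub]
  · refine Finset.sum_congr rfl fun j hj => ?_
    simp only [Finset.mem_range] at hj
    have hji : j ≤ (i : ℕ) := by omega
    -- inner sum collapses
    rw [← Finset.sum_subset hsub]
    · have : ∀ k ∈ Finset.range ((i : ℕ) + 1),
          (if j + k = (i : ℕ) then ub x α j * ub y α k else 0) =
          (if k = (i : ℕ) - j then ub x α j * ub y α ((i : ℕ) - j) else 0) := by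
        intro k hk
        simp only [Finset.mem_range] at hk
        by_cases h : j + k = (i : ℕ)
        · have hk2 : k = (i : ℕ) - j := by omega
          subst hk2
          rw [if_pos h, if_pos rfl]
        · have : k ≠ (i : ℕ) - j := by omega
          simp [h, this]
      rw [Finset.sum_congr rfl this, Finset.sum_ite_eq' (Finset.range ((i : ℕ) + 1))]
      simp [Nat.lt_succ_iff, hji, Nat.sub_le]
    · intro k _ hk
      simp only [Finset.mem_range, not_lt] at hk
      have : j + k ≠ (i : ℕ) := by omega
      simp [this]
  · intro j _ hj
    simp only [Finset.mem_range, not_lt] at hj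
    apply Finset.sum_eq_zero
    intro k _
    have : j + k ≠ (i : ℕ) := by omega
    simp [this]

/-- generating power series of a block -/
noncomputable def gf (x : ((α : Fin r) × Fin (m α)) → ℝ) (α : Fin r) : PowerSeries ℝ :=
  PowerSeries.mk (ub x α)

lemma bp_coeff (x y : ((α : Fin r) × Fin (m α)) → ℝ) (α : Fin r) (i : Fin (m α)) :
    blockProd m x y ⟨α, i⟩ = PowerSeries.coeff i (gf x α * gf y α) := by
  rw [bp_apply, PowerSeries.coeff_mul, Finset.Nat.sum_antidiagonal_eq_sum_range_succ_mk]
  simp [gf]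

lemma ub_bp (x y : ((α : Fin r) × Fin (m α)) → ℝ) (α : Fin r) (p : ℕ) (hp : p < m α) :
    ub (blockProd m x y) α p = PowerSeries.coeff p (gf x α * gf y α) := by
  rw [ub, dif_pos hp]
  exact bp_coeff x y α ⟨p, hp⟩

lemma coeff_mul_congr_left {f f' g : PowerSeries ℝ} {n : ℕ}
    (h : ∀ j ≤ n, PowerSeries.coeff j f = PowerSeries.coeff j f') :
    PowerSeries.coeff n (f * g) = PowerSeries.coeff n (f' * g) := by
  rw [PowerSeries.coeff_mul, PowerSeries.coeff_mul]
  refine Finset.sum_congr rfl fun p hp => ?_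
  replace hp : p.1 + p.2 = n := by simpa using hp
  rw [h p.1 (by omega)]

lemma blockProd_assoc (u v w : ((α : Fin r) × Fin (m α)) → ℝ) :
    blockProd m (blockProd m u v) w = blockProd m u (blockProd m v w) := by
  funext i
  obtain ⟨α, i2⟩ := i
  rw [bp_coeff, bp_coeff]
  have h1 : PowerSeries.coeff i2 (gf (blockProd m u v) α * gf w α)
      = PowerSeries.coeff i2 (gf u α * gf v α * gf w α) := by
    apply coeff_mul_congr_left
    intro j hj
    rw [gf, PowerSeries.coeff_mk, ub_bp]
    exact lt_of_le_of_lt hj i2.isLt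
  have h2 : PowerSeries.coeff i2 (gf u α * gf (blockProd m v w) α)
      = PowerSeries.coeff i2 (gf u α * (gf v α * gf w α)) := by
    rw [mul_comm (gf u α), mul_comm (gf u α)]
    apply coeff_mul_congr_left
    intro j hj
    rw [gf, PowerSeries.coeff_mk, ub_bp]
    exact lt_of_le_of_lt hj i2.isLt
  rw [h1, h2, mul_assoc]

lemma blockProd_comm (u v : ((α : Fin r) × Fin (m α)) → ℝ) :
    blockProd m u v = blockProd m v u := by
  funext i
  obtain ⟨α, i2⟩ := i
  rw [bp_coeff, bp_coeff, mul_comm]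

lemma one_bp (x : ((α : Fin r) × Fin (m α)) → ℝ) :
    blockProd m (blockUnit m) x = x := by
  funext i
  obtain ⟨α, i2⟩ := i
  rw [bp_apply]
  have hub : ∀ p, p < m α → ub (blockUnit m) α p = if p = 0 then 1 else 0 := by
    intro p hp; simp [ub, hp, blockUnit]
  rw [Finset.sum_eq_single 0]
  · rw [hub 0 (lt_of_le_of_lt (Nat.zero_le _) i2.isLt)]
    simp [ub_coe x α i2]
  · intro b hb' hb
    simp only [Finset.mem_range] at hb'
    rw [hub b (by omega)]
    simp [hb]
  · simp

lemma bp_one (x : ((α : Fin r) × Fin (m α)) → ℝ) :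
    blockProd m x (blockUnit m) = x := by
  rw [blockProd_comm, one_bp]

lemma blockProd_add_left (x x' y : ((α : Fin r) × Fin (m α)) → ℝ) :
    blockProd m (x + x') y = blockProd m x y + blockProd m x' y := by
  funext i
  simp only [blockProd, Pi.add_apply]
  rw [← Finset.sum_add_distrib]
  refine Finset.sum_congr rfl fun j _ => ?_
  rw [← Finset.sum_add_distrib]
  refine Finset.sum_congr rfl fun k _ => ?_
  split <;> simp [add_mul]

lemma blockProd_smul_left (c : ℝ) (x y : ((α : Fin r) × Fin (m α)) → ℝ) :
    blockProd m (c • x) y = c • blockProd m x y := by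
  funext i
  simp only [blockProd, Pi.smul_apply, smul_eq_mul]
  rw [Finset.mul_sum]
  refine Finset.sum_congr rfl fun j _ => ?_
  rw [Finset.mul_sum]
  refine Finset.sum_congr rfl fun k _ => ?_
  split <;> ring

lemma blockProd_zero_left (y : ((α : Fin r) × Fin (m α)) → ℝ) :
    blockProd m 0 y = 0 := by
  funext i
  simp only [blockProd, Pi.zero_apply]
  apply Finset.sum_eq_zero; intro j _
  apply Finset.sum_eq_zero; intro k _
  simp

lemma blockProd_add_right (x y y' : ((α : Fin r) × Fin (m α)) → ℝ) :
    blockProd m x (y + y') = blockProd m x y + blockProd m x y' := by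
  rw [blockProd_comm, blockProd_add_left, blockProd_comm y x, blockProd_comm y' x]

lemma blockProd_smul_right (c : ℝ) (x y : ((α : Fin r) × Fin (m α)) → ℝ) :
    blockProd m x (c • y) = c • blockProd m x y := by
  rw [blockProd_comm, blockProd_smul_left, blockProd_comm]

lemma blockProd_sub_left (x x' y : ((α : Fin r) × Fin (m α)) → ℝ) :
    blockProd m (x - x') y = blockProd m x y - blockProd m x' y := by
  have := blockProd_add_left (m := m) (x - x') x' y
  rw [sub_add_cancel] at this
  rw [this]; abel

lemma blockProd_sub_right (x y y' : ((α : Fin r) × Fin (m α)) → ℝ) :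
    blockProd m x (y - y') = blockProd m x y - blockProd m x y' := by
  rw [blockProd_comm, blockProd_sub_left, blockProd_comm y x, blockProd_comm y' x]

end S6

/-- Type synonym carrying the block-product ring structure. -/
def BV {r : ℕ} (m : Fin r → ℕ) : Type := ((α : Fin r) × Fin (m α)) → ℝ

namespace BV
variable {r : ℕ} {m : Fin r → ℕ}

noncomputable instance : AddCommGroup (BV m) := Pi.addCommGroup
noncomputable instance : Module ℝ (BV m) := Pi.module _ _ _

noncomputable instance : CommRing (BV m) :=
  { (inferInstance : AddCommGroup (BV m)) with
    mul := blockProd m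
    one := blockUnit m
    mul_assoc := S6.blockProd_assoc
    mul_comm := S6.blockProd_comm
    one_mul := S6.one_bp
    mul_one := S6.bp_one
    left_distrib := S6.blockProd_add_right
    right_distrib := fun x y z => S6.blockProd_add_left x y z
    zero_mul := fun x => S6.blockProd_zero_left x
    mul_zero := fun x => by
      show blockProd m x 0 = 0
      exact (S6.blockProd_comm x 0).trans (S6.blockProd_zero_left x) }

noncomputable instance : Algebra ℝ (BV m) :=
  Algebra.ofModule (fun c x y => by
      show blockProd m (c • x) y = c • blockProd m x y
      exact S6.blockProd_smul_left c x y)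
    (fun c x y => by
      show blockProd m x (c • y) = c • blockProd m x y
      exact S6.blockProd_smul_right c x y)

lemma mul_def (x y : BV m) : x * y = blockProd m x y := rfl
lemma one_def : (1 : BV m) = blockUnit m := rfl

end BV

namespace BV
variable {r : ℕ} {m : Fin r → ℕ}

lemma app_sub (x y : BV m) (ℓ) : (x - y) ℓ = x ℓ - y ℓ := rfl
lemma app_add (x y : BV m) (ℓ) : (x + y) ℓ = x ℓ + y ℓ := rfl
lemma app_smul (c : ℝ) (x : BV m) (ℓ) : (c • x) ℓ = c * x ℓ := rfl

open S6

lemma ub_sub (x y : BV m) (α p) : ub (x - y) α p = ub x α p - ub y α p := by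
  unfold ub; split <;> simp [app_sub]

lemma ub_one (α : Fin r) (p : ℕ) (hp : p < m α) :
    ub (1 : BV m) α p = if p = 0 then 1 else 0 := by
  simp [ub, hp]; rfl

lemma ub_algebraMap (c : ℝ) (α : Fin r) (p : ℕ) (hp : p < m α) :
    ub (algebraMap ℝ (BV m) c) α p = if p = 0 then c else 0 := by
  rw [Algebra.algebraMap_eq_smul_one]
  unfold ub
  rw [dif_pos hp, app_smul]
  have := ub_one (m := m) α p hp
  unfold ub at this
  rw [dif_pos hp] at this
  rw [this]
  split <;> simp

lemma ub_mul (x y : BV m) (α : Fin r) (p : ℕ) (hp : p < m α) :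
    ub (x * y : BV m) α p = ∑ q ∈ Finset.range (p + 1), ub x α q * ub y α (p - q) := by
  exact (dif_pos hp).trans (bp_apply x y α ⟨p, hp⟩)

lemma pow_low (x : BV m) (α : Fin r) (hx : ub x α 0 = 0) :
    ∀ k p, p < k → ub (x ^ k : BV m) α p = 0 := by
  intro k
  induction k with
  | zero => intro p hp; omega
  | succ k IH =>
    intro p hp
    by_cases hpm : p < m α
    · rw [pow_succ, ub_mul _ _ _ _ hpm]
      apply Finset.sum_eq_zero
      intro q hq
      simp only [Finset.mem_range] at hq
      by_cases hqk : q < k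
      · rw [IH q hqk, zero_mul]
      · have hqe : q = k ∧ p = k := by omega
        rw [hqe.1, hqe.2, Nat.sub_self, hx, mul_zero]
    · unfold ub; rw [dif_neg hpm]

lemma pow_diag (x : BV m) (α : Fin r) (hx : ub x α 0 = 0) :
    ∀ k, k < m α → ub (x ^ k : BV m) α k = (ub x α 1) ^ k := by
  intro k
  induction k with
  | zero =>
    intro hk
    rw [pow_zero, pow_zero, ub_one α 0 hk]
    simp
  | succ k IH =>
    intro hk
    rw [pow_succ, ub_mul _ _ _ _ hk]
    rw [Finset.sum_eq_single k]
    · have h1 : k + 1 - k = 1 := by omega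
      rw [IH (by omega), h1, pow_succ]
    · intro q hq hqk
      simp only [Finset.mem_range] at hq
      by_cases h : q < k
      · rw [pow_low x α hx k q h, zero_mul]
      · have : q = k + 1 := by omega
        rw [this, Nat.sub_self, hx, mul_zero]
    · intro h
      exact absurd (Finset.mem_range.2 (by omega)) h

lemma block_zero_mul (x y : BV m) (α : Fin r) (hx : ∀ p, ub x α p = 0) :
    ∀ p, ub (x * y : BV m) α p = 0 := by
  intro p
  by_cases hpm : p < m α
  · rw [ub_mul _ _ _ _ hpm]
    apply Finset.sum_eq_zero
    intro q _
    rw [hx q, zero_mul]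
  · unfold ub; rw [dif_neg hpm]

/-- evaluation at the bottom index of block `α`, as a ring hom (needs `0 < m α`). -/
noncomputable def ev0 (α : Fin r) (hα : 0 < m α) : BV m →+* ℝ where
  toFun x := ub x α 0
  map_one' := by show ub (1 : BV m) α 0 = 1; rw [ub_one α 0 hα]; simp
  map_mul' x y := by
    show ub (x * y : BV m) α 0 = ub x α 0 * ub y α 0
    rw [ub_mul _ _ _ _ hα]
    simp
  map_zero' := by show ub (0 : BV m) α 0 = 0; simp [ub]; intro h; rfl
  map_add' x y := by
    show ub (x + y) α 0 = ub x α 0 + ub y α 0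
    unfold ub; split <;> simp [app_add]

end BV

namespace BV
variable {r : ℕ} {m : Fin r → ℕ}
open S6

lemma app_sum {γ : Type*} (s : Finset γ) (f : γ → BV m) (ℓ : (β : Fin r) × Fin (m β)) :
    (∑ x ∈ s, f x) ℓ = ∑ x ∈ s, f x ℓ := by
  classical
  induction s using Finset.induction_on with
  | empty => rfl
  | insert _ _ h IH =>
    rw [Finset.sum_insert h, Finset.sum_insert h, app_add, IH]

lemma bv_expand (x : BV m) :
    x = (∑ ℓ : (β : Fin r) × Fin (m β), x ℓ • (Pi.single ℓ (1:ℝ) : BV m) : BV m) := by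
  funext ℓ'
  refine Eq.trans ?_ (app_sum _ _ ℓ').symm; beta_reduce
  rw [Finset.sum_eq_single ℓ']
  · refine Eq.trans ?_ (app_smul _ _ _).symm; rw [Pi.single_eq_same, mul_one]
  · intro ℓ _ hne
    refine (app_smul _ _ _).trans ?_; rw [Pi.single_eq_of_ne (Ne.symm hne), mul_zero]
  · intro h; exact absurd (Finset.mem_univ ℓ') h

/-- the subalgebra on which `ψ` acts as a derivation against everything -/
noncomputable def derSet (ψ : BV m → BV m)
    (hadd : ∀ x y, ψ (x + y) = ψ x + ψ y) (hsmul : ∀ (c : ℝ) x, ψ (c • x) = c • ψ x)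
    (hone : ψ 1 = 0) : Subalgebra ℝ (BV m) where
  carrier := {x | ∀ z, ψ (x * z) = ψ x * z + x * ψ z}
  mul_mem' := by
    intro x y hx hy z
    have h1 : ψ (x * y * z) = ψ x * (y * z) + x * (ψ y * z + y * ψ z) := by
      rw [mul_assoc, hx (y * z), hy z]
    have h2 : ψ (x * y) = ψ x * y + x * ψ y := hx y
    rw [h1, h2]; ring
  one_mem' := by
    intro z
    rw [one_mul, hone, zero_mul, zero_add, one_mul]
  add_mem' := by
    intro x y hx hy z
    rw [add_mul, hadd, hx z, hy z, hadd, add_mul, add_mul]; ring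
  zero_mem' := by
    intro z
    have h0 : ψ (0 : BV m) = 0 := by
      have := hsmul 0 0; simpa using this
    rw [zero_mul, h0, zero_mul, zero_mul, add_zero]
  algebraMap_mem' := by
    intro c z
    rw [Algebra.algebraMap_eq_smul_one]
    rw [smul_mul_assoc, one_mul, hsmul, hsmul, hone, smul_zero, zero_mul, zero_add,
      smul_mul_assoc, one_mul]

theorem core (hm : ∀ α, 0 < m α) (a : BV m) (ψ : BV m → BV m)
    (hadd : ∀ x y, ψ (x + y) = ψ x + ψ y) (hsmul : ∀ (c : ℝ) x, ψ (c • x) = c • ψ x)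
    (hone : ψ 1 = 0)
    (ha : ∀ z, ψ (a * z) = ψ a * z + a * ψ z)
    (hdista : ∀ α β, α ≠ β → ub a α 0 ≠ ub a β 0)
    (h2a : ∀ α, 2 ≤ m α → ub a α 1 ≠ 0) :
    ∀ x z, ψ (x * z) = ψ x * z + x * ψ z := by
  set S := derSet ψ hadd hsmul hone with hS
  have haS : a ∈ S := ha
  -- singles are in S
  let sg : ((β : Fin r) × Fin (m β)) → BV m := fun ℓ => Pi.single ℓ (1:ℝ)
  have hsingle : ∀ ℓ : ((α : Fin r) × Fin (m α)), sg ℓ ∈ S := by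
    rintro ⟨α, i⟩
    set c : Fin r → ℝ := fun β => ub a β 0 with hc
    set b : BV m := ∏ β ∈ Finset.univ.erase α, (a - algebraMap ℝ (BV m) (c β)) ^ (m β)
      with hb
    have hbS : b ∈ S := by
      apply Subalgebra.prod_mem
      intro β _
      exact pow_mem (sub_mem haS (Subalgebra.algebraMap_mem S (c β))) _
    -- t
    set t : BV m := a - algebraMap ℝ (BV m) (c α) with ht
    have htS : t ∈ S := sub_mem haS (Subalgebra.algebraMap_mem S (c α))
    have ht0 : ub t α 0 = 0 := by
      rw [ht, ub_sub, ub_algebraMap _ _ _ (hm α)]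
      simp [hc]
    -- factor blocks β ≠ α of b vanish
    have hfact : ∀ β : Fin r, β ≠ α → ∀ p, ub ((a - algebraMap ℝ (BV m) (c β)) ^ (m β) : BV m) β p = 0 := by
      intro β hβ p
      by_cases hpm : p < m β
      · apply pow_low
        · rw [ub_sub, ub_algebraMap _ _ _ (hm β)]; simp [hc]
        · exact hpm
      · unfold ub; rw [dif_neg hpm]
    have hbblock : ∀ β : Fin r, β ≠ α → ∀ p, ub b β p = 0 := by
      intro β hβ p
      have hβmem : β ∈ Finset.univ.erase α := Finset.mem_erase.2 ⟨hβ, Finset.mem_univ β⟩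
      rw [hb, ← Finset.mul_prod_erase _ _ hβmem]
      exact block_zero_mul _ _ β (hfact β hβ) p
    have hb0 : ub b α 0 ≠ 0 := by
      have : ub b α 0 = ∏ β ∈ Finset.univ.erase α, (c α - c β) ^ (m β) := by
        have hmapped := map_prod (ev0 α (hm α))
          (fun β => (a - algebraMap ℝ (BV m) (c β)) ^ (m β)) (Finset.univ.erase α)
        have : (ev0 α (hm α)) b = ∏ β ∈ Finset.univ.erase α,
            ((ev0 α (hm α)) (a - algebraMap ℝ (BV m) (c β))) ^ (m β) := by
          rw [hb, hmapped]
          exact Finset.prod_congr rfl fun β _ => map_pow _ _ _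
        rw [show (ev0 α (hm α)) b = ub b α 0 from rfl] at this
        rw [this]
        refine Finset.prod_congr rfl fun β _ => ?_
        congr 1
        rw [map_sub]
        show ub a α 0 - ub (algebraMap ℝ (BV m) (c β)) α 0 = c α - c β
        rw [ub_algebraMap _ _ _ (hm α)]
        simp [hc]
      rw [this]
      apply Finset.prod_ne_zero_iff.2
      intro β hβ
      apply pow_ne_zero
      have hβα : β ≠ α := (Finset.mem_erase.1 hβ).1
      exact sub_ne_zero.2 (hdista α β (Ne.symm hβα))
    -- the staircase elements
    set vv : ℕ → BV m := fun j => b * t ^ j with hvv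
    have hvS : ∀ j, vv j ∈ S := fun j => mul_mem hbS (pow_mem htS j)
    have hvblock : ∀ j, ∀ β : Fin r, β ≠ α → ∀ p, ub (vv j) β p = 0 := by
      intro j β hβ p
      exact block_zero_mul _ _ β (hbblock β hβ) p
    have hvlow : ∀ j, ∀ p, p < j → ub (vv j) α p = 0 := by
      intro j p hpj
      by_cases hpm : p < m α
      · rw [hvv]
        simp only
        rw [ub_mul _ _ _ _ hpm]
        apply Finset.sum_eq_zero
        intro q hq
        rw [pow_low t α ht0 j (p - q) (by omega), mul_zero]
      · unfold ub; rw [dif_neg hpm]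
    have hvdiag : ∀ j, j < m α → ub (vv j) α j ≠ 0 := by
      intro j hjm
      rw [hvv]
      simp only
      rw [ub_mul _ _ _ _ hjm]
      rw [Finset.sum_eq_single 0]
      · rw [Nat.sub_zero, pow_diag t α ht0 j hjm]
        apply mul_ne_zero hb0
        rcases Nat.eq_zero_or_pos j with hj0 | hjpos
        · rw [hj0, pow_zero]; exact one_ne_zero
        · apply pow_ne_zero
          have hm2 : 2 ≤ m α := by omega
          have : ub t α 1 = ub a α 1 := by
            rw [ht, ub_sub, ub_algebraMap _ _ _ (by omega : 1 < m α)]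
            simp
          rw [this]
          exact h2a α hm2
      · intro q hq hq0
        rw [pow_low t α ht0 j (j - q) (by
          simp only [Finset.mem_range] at hq
          omega), mul_zero]
      · intro h
        exact absurd (Finset.mem_range.2 (by omega)) h
    -- downward induction
    have key : ∀ n : ℕ, ∀ i' : Fin (m α), m α - (i' : ℕ) ≤ n →
        sg ⟨α, i'⟩ ∈ S := by
      intro n
      induction n with
      | zero => intro i' h; exfalso; have := i'.isLt; omega
      | succ n IH =>
        intro i' hi'
        set d := ub (vv i') α i' with hd
        have hdne : d ≠ 0 := hvdiag i' i'.isLt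
        have hexp : vv (i' : ℕ) = (∑ ℓ : (β : Fin r) × Fin (m β), (vv i') ℓ • sg ℓ : BV m) :=
          bv_expand (vv (i' : ℕ))
        have hrest : ((∑ ℓ ∈ Finset.univ.erase ⟨α, i'⟩, (vv i') ℓ • sg ℓ : BV m)) ∈ S := by
          refine Subalgebra.sum_mem S fun ℓ hℓ => ?_
          by_cases hz : (vv i') ℓ = 0
          · rw [hz, zero_smul]; exact zero_mem S
          · obtain ⟨β, p⟩ := ℓ
            have hβα : β = α := by
              by_contra hne
              exact hz (by rw [← ub_coe (vv i') β p]; exact hvblock i' β hne p)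
            subst hβα
            have hip : (i' : ℕ) < (p : ℕ) := by
              rcases Nat.lt_trichotomy (p : ℕ) (i' : ℕ) with h | h | h
              · exact absurd (by rw [← ub_coe (vv i') β p]; exact hvlow i' p h) hz
              · exfalso
                have : (⟨β, p⟩ : (γ : Fin r) × Fin (m γ)) = ⟨β, i'⟩ := by
                  congr 1; exact Fin.ext h
                exact (Finset.mem_erase.1 hℓ).1 this
              · exact h
            exact Subalgebra.smul_mem S (IH p (by omega)) _
        set rest : BV m := (∑ ℓ ∈ Finset.univ.erase ⟨α, i'⟩, (vv i') ℓ • sg ℓ : BV m) with hrestdef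
        have hexp2 : vv (i' : ℕ) = d • sg ⟨α, i'⟩ + rest := by
          rw [hrestdef]
          conv_lhs => rw [hexp]
          rw [← Finset.add_sum_erase _ (fun ℓ => (vv i') ℓ • sg ℓ)
            (Finset.mem_univ (⟨α, i'⟩ : (β : Fin r) × Fin (m β)))]
          congr 1
          rw [hd, ub_coe (vv (i' : ℕ)) α i']
        have h3 : sg ⟨α, i'⟩ = d⁻¹ • (vv (i' : ℕ) - rest) := by
          rw [hexp2, add_sub_cancel_right, smul_smul, inv_mul_cancel₀ hdne, one_smul]
        rw [h3]
        exact Subalgebra.smul_mem S (sub_mem (hvS _) hrest) _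
    exact key (m α) i (by omega)
  -- every element is in S
  have hall : ∀ x : BV m, x ∈ S := by
    intro x
    have hexp : x = (∑ ℓ : (β : Fin r) × Fin (m β), x ℓ • sg ℓ : BV m) := bv_expand x
    rw [hexp]
    exact Subalgebra.sum_mem S fun ℓ _ => Subalgebra.smul_mem S (hsingle ℓ) _
  exact fun x => hall x

end BV

namespace S6
variable {ι : Type*} [Fintype ι] [DecidableEq ι]
variable {u : ι → ℝ} {f g : (ι → ℝ) → ℝ}

lemma pd_const (s : ι) (c : ℝ) : pd s (fun _ => c) u = 0 := by
  simp [pd]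

lemma pd_mul (s : ι) (hf : DifferentiableAt ℝ f u) (hg : DifferentiableAt ℝ g u) :
    pd s (fun v => f v * g v) u = f u * pd s g u + g u * pd s f u := by
  unfold pd
  rw [fderiv_fun_mul hf hg]
  simp

lemma pd_sum {γ : Type*} (s : ι) (T : Finset γ) (f : γ → (ι → ℝ) → ℝ)
    (hf : ∀ j ∈ T, DifferentiableAt ℝ (f j) u) :
    pd s (fun v => ∑ j ∈ T, f j v) u = ∑ j ∈ T, pd s (f j) u := by
  unfold pd
  rw [fderiv_fun_sum hf]
  simp

end S6

section Calc
variable {r : ℕ} {m : Fin r → ℕ}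
open S6

local notation "V" => ((α : Fin r) × Fin (m α)) → ℝ


lemma diff_bp_comp {F G : V → V} {u : V}
    (hF : ∀ i, DifferentiableAt ℝ (fun v => F v i) u)
    (hG : ∀ i, DifferentiableAt ℝ (fun v => G v i) u) (i : (α : Fin r) × Fin (m α)) :
    DifferentiableAt ℝ (fun v => blockProd m (F v) (G v) i) u := by
  unfold blockProd
  apply DifferentiableAt.fun_sum
  intro j _
  apply DifferentiableAt.fun_sum
  intro k _
  by_cases h : (j : ℕ) + (k : ℕ) = (i.2 : ℕ)
  · simp only [if_pos h]
    exact (hF _).mul (hG _)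
  · simp only [if_neg h]
    exact differentiableAt_const 0

lemma pd_bp {F G : V → V} {u : V}
    (hF : ∀ i, DifferentiableAt ℝ (fun v => F v i) u)
    (hG : ∀ i, DifferentiableAt ℝ (fun v => G v i) u)
    (s i : (α : Fin r) × Fin (m α)) :
    pd s (fun v => blockProd m (F v) (G v) i) u
      = blockProd m (fun j => pd s (fun v => F v j) u) (G u) i
      + blockProd m (F u) (fun k => pd s (fun v => G v k) u) i := by
  unfold blockProd
  rw [pd_sum s Finset.univ _ (fun j _ => by
    apply DifferentiableAt.fun_sum
    intro k _
    by_cases h : (j : ℕ) + (k : ℕ) = (i.2 : ℕ)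
    · simp only [if_pos h]; exact (hF _).mul (hG _)
    · simp only [if_neg h]; exact differentiableAt_const 0)]
  rw [← Finset.sum_add_distrib]
  refine Finset.sum_congr rfl fun j _ => ?_
  rw [pd_sum s Finset.univ _ (fun k _ => by
    by_cases h : (j : ℕ) + (k : ℕ) = (i.2 : ℕ)
    · simp only [if_pos h]; exact (hF _).mul (hG _)
    · simp only [if_neg h]; exact differentiableAt_const 0)]
  rw [← Finset.sum_add_distrib]
  refine Finset.sum_congr rfl fun k _ => ?_
  by_cases h : (j : ℕ) + (k : ℕ) = (i.2 : ℕ)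
  · simp only [if_pos h]
    rw [pd_mul s (hF _) (hG _)]
    ring
  · simp only [if_neg h]
    rw [pd_const]
    simp

/-- directional derivative of a vector field, at `u` in direction `w` -/
noncomputable def Dd (F : V → V) (u w : V) : V :=
  fun i => ∑ s, w s * pd s (fun v => F v i) u

lemma sum_swap3 {A : Type*} (T : Finset A) {n : ℕ} (g : Fin n → Fin n → A → ℝ) :
    (∑ j : Fin n, ∑ k : Fin n, ∑ t ∈ T, g j k t)
      = ∑ t ∈ T, ∑ j : Fin n, ∑ k : Fin n, g j k t :=
  calc (∑ j : Fin n, ∑ k : Fin n, ∑ t ∈ T, g j k t)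
      = ∑ j : Fin n, ∑ t ∈ T, ∑ k : Fin n, g j k t :=
        Finset.sum_congr rfl fun j _ => Finset.sum_comm
    _ = ∑ t ∈ T, ∑ j : Fin n, ∑ k : Fin n, g j k t := Finset.sum_comm

lemma bp_sum_left {γ : Type*} (T : Finset γ) (f : γ → V) (y : V)
    (i : (α : Fin r) × Fin (m α)) :
    blockProd m (fun j => ∑ t ∈ T, f t j) y i = ∑ t ∈ T, blockProd m (f t) y i := by
  unfold blockProd
  have h1 : ∀ j k : Fin (m i.1),
      (if (j : ℕ) + (k : ℕ) = (i.2 : ℕ) then (∑ t ∈ T, f t ⟨i.1, j⟩) * y ⟨i.1, k⟩ else 0)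
        = ∑ t ∈ T, (if (j : ℕ) + (k : ℕ) = (i.2 : ℕ) then f t ⟨i.1, j⟩ * y ⟨i.1, k⟩ else 0) := by
    intro j k
    rw [Finset.sum_mul]
    split <;> simp
  calc (∑ j : Fin (m i.1), ∑ k : Fin (m i.1),
        if (j : ℕ) + (k : ℕ) = (i.2 : ℕ) then (∑ t ∈ T, f t ⟨i.1, j⟩) * y ⟨i.1, k⟩ else 0)
      = ∑ j : Fin (m i.1), ∑ k : Fin (m i.1), ∑ t ∈ T,
          (if (j : ℕ) + (k : ℕ) = (i.2 : ℕ) then f t ⟨i.1, j⟩ * y ⟨i.1, k⟩ else 0) :=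
        Finset.sum_congr rfl fun j _ => Finset.sum_congr rfl fun k _ => h1 j k
    _ = ∑ t ∈ T, ∑ j : Fin (m i.1), ∑ k : Fin (m i.1),
          (if (j : ℕ) + (k : ℕ) = (i.2 : ℕ) then f t ⟨i.1, j⟩ * y ⟨i.1, k⟩ else 0) :=
        sum_swap3 T _

lemma bp_sum_right {γ : Type*} (T : Finset γ) (x : V) (f : γ → V)
    (i : (α : Fin r) × Fin (m α)) :
    blockProd m x (fun k => ∑ t ∈ T, f t k) i = ∑ t ∈ T, blockProd m x (f t) i :=
  calc blockProd m x (fun k => ∑ t ∈ T, f t k) i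
      = blockProd m (fun k => ∑ t ∈ T, f t k) x i := by rw [S6.blockProd_comm]
    _ = ∑ t ∈ T, blockProd m (f t) x i := bp_sum_left T f x i
    _ = ∑ t ∈ T, blockProd m x (f t) i :=
        Finset.sum_congr rfl fun t _ => by rw [S6.blockProd_comm]

lemma Dd_bp {F G : V → V} {u : V}
    (hF : ∀ i, DifferentiableAt ℝ (fun v => F v i) u)
    (hG : ∀ i, DifferentiableAt ℝ (fun v => G v i) u) (w : V) :
    Dd (fun v => blockProd m (F v) (G v)) u w
      = blockProd m (Dd F u w) (G u) + blockProd m (F u) (Dd G u w) := by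
  funext i
  show (∑ s, w s * pd s (fun v => blockProd m (F v) (G v) i) u) = _
  have h1 : ∀ s : (α : Fin r) × Fin (m α),
      w s * pd s (fun v => blockProd m (F v) (G v) i) u
        = blockProd m (fun j => w s * pd s (fun v => F v j) u) (G u) i
        + blockProd m (F u) (fun k => w s * pd s (fun v => G v k) u) i := by
    intro s
    rw [pd_bp hF hG s i, mul_add]
    congr 1
    · exact (congrFun (S6.blockProd_smul_left (w s)
        (fun j => pd s (fun v => F v j) u) (G u)) i).symm
    · exact (congrFun (S6.blockProd_smul_right (w s) (F u)
        (fun k => pd s (fun v => G v k) u)) i).symm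
  rw [Finset.sum_congr rfl fun s _ => h1 s, Finset.sum_add_distrib]
  show _ = blockProd m (Dd F u w) (G u) i + blockProd m (F u) (Dd G u w) i
  congr 1
  · rw [← bp_sum_left]
    rfl
  · rw [← bp_sum_right]
    rfl

lemma lieBr_eq (X Y : V → V) (u : V) :
    lieBr X Y u = Dd Y u (X u) - Dd X u (Y u) := by
  funext i
  show (∑ s, (X u s * pd s (fun v => Y v i) u - Y u s * pd s (fun v => X v i) u)) = _
  rw [Finset.sum_sub_distrib]
  rfl

lemma Dd_const (c : V) (u w : V) : Dd (fun _ => c) u w = 0 := by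
  funext i
  show (∑ s, w s * pd s (fun _ => c i) u) = 0
  apply Finset.sum_eq_zero
  intro s _
  rw [pd_const, mul_zero]

end Calc

section Pointwise
variable {r : ℕ} {m : Fin r → ℕ}
open S6

local notation "V" => ((α : Fin r) × Fin (m α)) → ℝ

/-- pointwise eventual-identity tensor -/
noncomputable def Pp (D : V → V) (x y : V) : V :=
  blockProd m (D x) y + blockProd m x (D y) - D (blockProd m x y)
    - blockProd m (blockProd m (D (blockUnit m)) x) y

/-- pointwise Nijenhuis building block -/
noncomputable def Qq (D : V → V) (a z : V) : V :=
  D (blockProd m a z) - blockProd m a (D z)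

lemma Kdef_eq {E X Y : V → V} {u : V}
    (hE : ∀ i, DifferentiableAt ℝ (fun v => E v i) u)
    (hX : ∀ i, DifferentiableAt ℝ (fun v => X v i) u)
    (hY : ∀ i, DifferentiableAt ℝ (fun v => Y v i) u) :
    Kdef m E X Y u = Pp (m := m) (fun z => Dd E u z) (X u) (Y u) := by
  unfold Kdef Pp
  rw [lieBr_eq E (fun v => blockProd m (X v) (Y v)) u, lieBr_eq E X u, lieBr_eq E Y u,
      lieBr_eq (fun _ => blockUnit m) E u, Dd_bp hX hY (E u), Dd_const]
  rw [S6.blockProd_sub_left (Dd X u (E u)) (Dd E u (X u)) (Y u),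
      S6.blockProd_sub_right (X u) (Dd Y u (E u)) (Dd E u (Y u)), sub_zero]
  abel

lemma nij_eq {E X Y : V → V} {u : V}
    (hE : ∀ i, DifferentiableAt ℝ (fun v => E v i) u)
    (hX : ∀ i, DifferentiableAt ℝ (fun v => X v i) u)
    (hY : ∀ i, DifferentiableAt ℝ (fun v => Y v i) u) :
    nij (fun v w => blockProd m (E v) w) X Y u
      = blockProd m (Qq (m := m) (fun z => Dd E u z) (E u) (X u)) (Y u)
        - blockProd m (Qq (m := m) (fun z => Dd E u z) (E u) (Y u)) (X u) := by
  unfold nij Qq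
  rw [lieBr_eq (fun v => blockProd m (E v) (X v)) (fun v => blockProd m (E v) (Y v)) u,
      lieBr_eq (fun v => blockProd m (E v) (X v)) Y u,
      lieBr_eq X (fun v => blockProd m (E v) (Y v)) u,
      lieBr_eq X Y u]
  simp only [Dd_bp hE hX, Dd_bp hE hY]
  simp only [S6.blockProd_sub_right, S6.blockProd_add_right, S6.blockProd_sub_left,
    S6.blockProd_add_left]
  rw [← S6.blockProd_assoc (E u) (Dd E u (Y u)) (X u),
      ← S6.blockProd_assoc (E u) (Dd E u (X u)) (Y u)]
  abel

end Pointwise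

section Assembly
variable {r : ℕ} {m : Fin r → ℕ}
open S6

local notation "V" => ((α : Fin r) × Fin (m α)) → ℝ

lemma Dd_addz (F : V → V) (u z z' : V) : Dd F u (z + z') = Dd F u z + Dd F u z' := by
  funext i
  show (∑ s, (z s + z' s) * pd s (fun v => F v i) u)
    = (∑ s, z s * pd s (fun v => F v i) u) + ∑ s, z' s * pd s (fun v => F v i) u
  rw [← Finset.sum_add_distrib]
  exact Finset.sum_congr rfl fun s _ => add_mul _ _ _

lemma Dd_smulz (F : V → V) (u : V) (c : ℝ) (z : V) : Dd F u (c • z) = c • Dd F u z := by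
  funext i
  show (∑ s, (c * z s) * pd s (fun v => F v i) u) = c * ∑ s, z s * pd s (fun v => F v i) u
  rw [Finset.mul_sum]
  exact Finset.sum_congr rfl fun s _ => by ring

/-- the pointwise equivalence, in `BV` language -/
lemma pointwise_equiv (hm : ∀ α, 0 < m α) (a : BV m) (D : BV m → BV m)
    (hDadd : ∀ z z', D (z + z') = D z + D z')
    (hDsmul : ∀ (c : ℝ) z, D (c • z) = c • D z)
    (hdista : ∀ α β, α ≠ β → S6.ub a α 0 ≠ S6.ub a β 0)
    (h2a : ∀ α, 2 ≤ m α → S6.ub a α 1 ≠ 0) :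
    (∀ x y : BV m, (D (a * x) - a * D x) * y - (D (a * y) - a * D y) * x = 0)
    ↔ (∀ x y : BV m, D x * y + x * D y - D (x * y) - (D 1 * x) * y = 0) := by
  constructor
  · intro h
    have h1 : ∀ x : BV m, D (a * x) - a * D x = (D a - a * D 1) * x := by
      intro x
      have h0 := h x 1
      have ha1 : a * 1 = a := mul_one a
      rw [ha1] at h0
      linear_combination h0
    set ψ : BV m → BV m := fun z => D z - D 1 * z with hψ
    have hadd : ∀ x y : BV m, ψ (x + y) = ψ x + ψ y := by
      intro x y; simp only [hψ, hDadd]; ring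
    have hsmul : ∀ (c : ℝ) (x : BV m), ψ (c • x) = c • ψ x := by
      intro c x
      simp only [hψ, hDsmul]
      rw [mul_smul_comm, smul_sub]
    have hone : ψ 1 = 0 := by simp only [hψ]; rw [mul_one, sub_self]
    have haz : ∀ z : BV m, ψ (a * z) = ψ a * z + a * ψ z := by
      intro z
      simp only [hψ]
      linear_combination h1 z
    have hder := BV.core hm a ψ hadd hsmul hone haz hdista h2a
    intro x y
    have hder' := hder x y
    simp only [hψ] at hder'
    linear_combination -(hder')
  · intro h x y
    have hQ : ∀ z : BV m, D (a * z) - a * D z = D a * z - (D 1 * a) * z := by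
      intro z
      linear_combination -(h a z)
    rw [hQ x, hQ y]
    ring

lemma comp_diff {U : Set V} {X : V → V} {u : V}
    (hX : ContDiffOn ℝ (⊤ : ℕ∞) X U) (hU : IsOpen U) (hu : u ∈ U)
    (i : (α : Fin r) × Fin (m α)) :
    DifferentiableAt ℝ (fun v => X v i) u := by
  have h1 : DifferentiableAt ℝ X u :=
    (hX.differentiableOn (by simp)).differentiableAt (hU.mem_nhds hu)
  exact differentiableAt_pi.mp h1 i

end Assembly

section Final
variable {r : ℕ} {m : Fin r → ℕ}
open S6

local notation "V" => ((α : Fin r) × Fin (m α)) → ℝ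

lemma Pp_bv (D : BV m → BV m) (x y : BV m) :
    Pp (m := m) D x y = D x * y + x * D y - D (x * y) - (D 1 * x) * y := rfl

lemma Qskew_bv (D : BV m → BV m) (a x y : BV m) :
    blockProd m (Qq (m := m) D a x) y - blockProd m (Qq (m := m) D a y) x
      = (D (a * x) - a * D x) * y - (D (a * y) - a * D y) * x := rfl

noncomputable def toBV : (((α : Fin r) × Fin (m α)) → ℝ) → BV m := fun x => x

noncomputable def DdB (E : (((α : Fin r) × Fin (m α)) → ℝ) → ((α : Fin r) × Fin (m α)) → ℝ)
    (u : ((α : Fin r) × Fin (m α)) → ℝ) : BV m → BV m := fun z => Dd E u z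

set_option maxHeartbeats 2000000 in
theorem stmt6' (hm : ∀ α, 0 < m α)
    (U : Set (((α : Fin r) × Fin (m α)) → ℝ)) (hU : IsOpen U)
    (E : (((α : Fin r) × Fin (m α)) → ℝ) → ((α : Fin r) × Fin (m α)) → ℝ)
    (hE : ContDiffOn ℝ (⊤ : ℕ∞) E U)
    (hdist : ∀ u ∈ U, ∀ α β : Fin r, α ≠ β →
      E u ⟨α, ⟨0, hm α⟩⟩ ≠ E u ⟨β, ⟨0, hm β⟩⟩)
    (h2 : ∀ α : Fin r, ∀ h : 2 ≤ m α, ∀ u ∈ U, E u ⟨α, ⟨1, h⟩⟩ ≠ 0) :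
    (∀ X Y : (((α : Fin r) × Fin (m α)) → ℝ) → ((α : Fin r) × Fin (m α)) → ℝ,
      ContDiffOn ℝ (⊤ : ℕ∞) X U → ContDiffOn ℝ (⊤ : ℕ∞) Y U →
      ∀ u ∈ U, nij (fun v w => blockProd m (E v) w) X Y u = 0)
    ↔
    (∀ X Y : (((α : Fin r) × Fin (m α)) → ℝ) → ((α : Fin r) × Fin (m α)) → ℝ,
      ContDiffOn ℝ (⊤ : ℕ∞) X U → ContDiffOn ℝ (⊤ : ℕ∞) Y U →
      ∀ u ∈ U, Kdef m E X Y u = 0) := by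
  -- pointwise data at a point of U
  have hEd : ∀ u ∈ U, ∀ i, DifferentiableAt ℝ (fun v => E v i) u :=
    fun u hu i => comp_diff hE hU hu i
  have hdista : ∀ u ∈ U, ∀ α β, α ≠ β →
      S6.ub (toBV (E u)) α 0 ≠ S6.ub (toBV (E u)) β 0 := by
    intro u hu α β hαβ
    have h1 : S6.ub (toBV (E u)) α 0 = E u ⟨α, ⟨0, hm α⟩⟩ := dif_pos (hm α)
    have h2' : S6.ub (toBV (E u)) β 0 = E u ⟨β, ⟨0, hm β⟩⟩ := dif_pos (hm β)
    rw [h1, h2']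
    exact hdist u hu α β hαβ
  have h2a : ∀ u ∈ U, ∀ α, 2 ≤ m α → S6.ub (toBV (E u)) α 1 ≠ 0 := by
    intro u hu α hα
    have h1 : S6.ub (toBV (E u)) α 1 = E u ⟨α, ⟨1, hα⟩⟩ := dif_pos hα
    rw [h1]
    exact h2 α hα u hu
  have hDadd : ∀ u, ∀ z z' : BV m,
      DdB E u (z + z') = DdB E u z + DdB E u z' := fun u z z' => Dd_addz E u z z'
  have hDsmul : ∀ u, ∀ (c : ℝ), ∀ z : BV m,
      DdB E u (c • z) = c • DdB E u z := fun u c z => Dd_smulz E u c z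
  constructor
  · intro hN X Y hX hY u hu
    have hNpt : ∀ x y : BV m,
        (DdB E u (toBV (E u) * x) - toBV (E u) * DdB E u x) * y
          - (DdB E u (toBV (E u) * y) - toBV (E u) * DdB E u y) * x = 0 := by
      intro x y
      have h0 := hN (fun _ => (x : ((α : Fin r) × Fin (m α)) → ℝ))
        (fun _ => (y : ((α : Fin r) × Fin (m α)) → ℝ))
        contDiffOn_const contDiffOn_const u hu
      exact (nij_eq (m := m) (E := E) (X := fun _ => (x : ((α : Fin r) × Fin (m α)) → ℝ))
        (Y := fun _ => (y : ((α : Fin r) × Fin (m α)) → ℝ)) (u := u)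
        (hEd u hu) (fun i => differentiableAt_const _)
        (fun i => differentiableAt_const _)).symm.trans h0
    have hKpt := (pointwise_equiv hm (toBV (E u)) (DdB E u)
      (hDadd u) (hDsmul u) (hdista u hu) (h2a u hu)).mp hNpt
    exact (Kdef_eq (m := m) (E := E) (X := X) (Y := Y) (u := u)
      (hEd u hu) (fun i => comp_diff hX hU hu i)
      (fun i => comp_diff hY hU hu i)).trans (hKpt (X u) (Y u))
  · intro hK X Y hX hY u hu
    have hKpt : ∀ x y : BV m,
        DdB E u x * y + x * DdB E u y - DdB E u (x * y)
          - (DdB E u 1 * x) * y = 0 := by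
      intro x y
      have h0 := hK (fun _ => (x : ((α : Fin r) × Fin (m α)) → ℝ))
        (fun _ => (y : ((α : Fin r) × Fin (m α)) → ℝ))
        contDiffOn_const contDiffOn_const u hu
      exact (Kdef_eq (m := m) (E := E) (X := fun _ => (x : ((α : Fin r) × Fin (m α)) → ℝ))
        (Y := fun _ => (y : ((α : Fin r) × Fin (m α)) → ℝ)) (u := u)
        (hEd u hu) (fun i => differentiableAt_const _)
        (fun i => differentiableAt_const _)).symm.trans h0
    have hNpt := (pointwise_equiv hm (toBV (E u)) (DdB E u)
      (hDadd u) (hDsmul u) (hdista u hu) (h2a u hu)).mpr hKpt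
    exact (nij_eq (m := m) (E := E) (X := X) (Y := Y) (u := u)
      (hEd u hu) (fun i => comp_diff hX hU hu i)
      (fun i => comp_diff hY hU hu i)).trans (hNpt (X u) (Y u))

end Final


/-- under the non-coincidence and nondegeneracy assumptions, the Nijenhuis
torsion of `L = E∘` vanishes on `U` iff `E` is an eventual identity on `U`. -/
theorem stmt6 {r : ℕ} (m : Fin r → ℕ) (hm : ∀ α, 0 < m α)
    (U : Set (((α : Fin r) × Fin (m α)) → ℝ)) (hU : IsOpen U)
    (E : (((α : Fin r) × Fin (m α)) → ℝ) → ((α : Fin r) × Fin (m α)) → ℝ)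
    (hE : ContDiffOn ℝ (⊤ : ℕ∞) E U)
    (hdist : ∀ u ∈ U, ∀ α β : Fin r, α ≠ β →
      E u ⟨α, ⟨0, hm α⟩⟩ ≠ E u ⟨β, ⟨0, hm β⟩⟩)
    (h2 : ∀ α : Fin r, ∀ h : 2 ≤ m α, ∀ u ∈ U, E u ⟨α, ⟨1, h⟩⟩ ≠ 0) :
    (∀ X Y : (((α : Fin r) × Fin (m α)) → ℝ) → ((α : Fin r) × Fin (m α)) → ℝ,
      ContDiffOn ℝ (⊤ : ℕ∞) X U → ContDiffOn ℝ (⊤ : ℕ∞) Y U →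
      ∀ u ∈ U, nij (fun v w => blockProd m (E v) w) X Y u = 0)
    ↔
    (∀ X Y : (((α : Fin r) × Fin (m α)) → ℝ) → ((α : Fin r) × Fin (m α)) → ℝ,
      ContDiffOn ℝ (⊤ : ℕ∞) X U → ContDiffOn ℝ (⊤ : ℕ∞) Y U →
      ∀ u ∈ U, Kdef m E X Y u = 0) := by
  exact stmt6' hm U hU E hE hdist h2
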